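/- The Zeckendorf numeration system is addable: the set of triples (x, y, z) of words over {0,1} of equal length (padded with leading zeros) such that each of x, y, z has no factor 11 after removing leading zeros and val_F(x) + val_F(y) = val_F(z), where val_F(a_m⋯a₀) = Σᵢ aᵢ Fᵢ with F₀=1, F₁=2, F_{n+2}=F_{n+1}+F_n, is a regular language over the alphabet {0,1}³. -/

import Mathlib

/-- The Fibonacci sequence `F₀ = 1, F₁ = 2, F_{n+2} = F_{n+1} + F_n`. -/
def Fib : ℕ → ℤ
  | 0 => 1
  | 1 => 2
  | n + 2 => Fib (n + 1) + Fib n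

/-- The Zeckendorf value of a word over `{0,1}`, most significant digit first:
`val_F (a_m ⋯ a₀) = Σᵢ aᵢ Fᵢ`. -/
def valF (w : List (Fin 2)) : ℤ :=
  ∑ i ∈ Finset.range w.reverse.length, ((w.reverse.getD i 0 : Fin 2) : ℕ) * Fib i

/-- A word is a valid (padded) Zeckendorf representation if it has no factor
`11` after removing its leading zeros. -/
def zeckGood (w : List (Fin 2)) : Prop :=
  ¬ ([1, 1] <:+: w.dropWhile (· = 0))

namespace Zeck

def fz (n : ℕ) : ℤ := (Nat.fib n : ℤ)

lemma fz_nonneg (n : ℕ) : 0 ≤ fz n := Int.ofNat_nonneg _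

lemma fz_add_two (n : ℕ) : fz (n + 2) = fz (n + 1) + fz n := by
  simp [fz, Nat.fib_add_two]; ring

lemma fz_mono {m n : ℕ} (h : m ≤ n) : fz m ≤ fz n := by
  simpa [fz] using Int.ofNat_le.mpr (Nat.fib_mono h)

lemma fz_pos (n : ℕ) : 1 ≤ fz (n + 1) := by
  have := Nat.fib_pos.mpr (Nat.succ_pos n)
  simp only [fz]; exact_mod_cast this

lemma fz_prod (k r : ℕ) : fz (k + r + 1) = fz k * fz r + fz (k + 1) * fz (r + 1) := by
  simp only [fz, Nat.fib_add]; push_cast; ring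

lemma Fib_eq_fz (n : ℕ) : Fib n = fz (n + 2) := by
  induction n using Nat.twoStepInduction with
  | zero => decide
  | one => decide
  | more n h1 h2 =>
      rw [Fib, h1, h2, fz_add_two (n + 2), show n + 2 + 1 = n + 1 + 2 by omega]

def Dstep (p : ℤ × ℤ) (e : ℤ) : ℤ × ℤ := (p.1 + p.2 + e, p.1 + e)

def Dp (l : List ℤ) : ℤ × ℤ := l.foldl Dstep (0, 0)

@[simp] lemma Dp_nil : Dp [] = (0, 0) := rfl

lemma Dp_snoc (l : List ℤ) (e : ℤ) : Dp (l ++ [e]) = Dstep (Dp l) e := by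
  simp [Dp, List.foldl_append]

def S (c : ℕ) (u : List ℤ) : ℤ :=
  ∑ i ∈ Finset.range u.length, u.getD i 0 * fz (i + c)

@[simp] lemma S_nil (c : ℕ) : S c [] = 0 := by simp [S]

lemma S_cons (c : ℕ) (e : ℤ) (u : List ℤ) :
    S c (e :: u) = e * fz c + S (c + 1) u := by
  simp only [S, List.length_cons, Finset.sum_range_succ', List.getD_cons_succ,
    List.getD_cons_zero, zero_add]
  rw [add_comm]
  congr 1
  exact Finset.sum_congr rfl fun i _ => by rw [show i + 1 + c = i + (c + 1) by omega]

lemma S_add_two (c : ℕ) (u : List ℤ) : S (c + 2) u = S (c + 1) u + S c u := by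
  simp only [S, ← Finset.sum_add_distrib]
  apply Finset.sum_congr rfl
  intro i _
  rw [show i + (c + 2) = (i + c) + 2 by omega, fz_add_two, show i + (c + 1) = i + c + 1 by omega]
  ring

lemma S3 (u : List ℤ) : S 3 u = S 2 u + S 1 u := S_add_two 1 u

lemma fz_one : fz 1 = 1 := rfl
lemma fz_two : fz 2 = 1 := rfl

lemma Dp_eq_S (l : List ℤ) : Dp l = (S 2 l.reverse, S 1 l.reverse) := by
  induction l using List.reverseRecOn with
  | nil => simp
  | append_singleton l e ih =>
      rw [Dp_snoc, ih]
      simp only [List.reverse_append, List.reverse_cons, List.reverse_nil, List.nil_append,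
        List.singleton_append, S_cons, Dstep]
      rw [S3, fz_one, fz_two]
      simp only [Prod.mk.injEq]
      constructor <;> ring

lemma foldl_Dstep (s : List ℤ) : ∀ p : ℤ × ℤ,
    s.foldl Dstep p =
      (fz (s.length + 1) * p.1 + fz s.length * p.2 + (Dp s).1,
       fz s.length * p.1 + (fz (s.length + 1) - fz s.length) * p.2 + (Dp s).2) := by
  induction s with
  | nil => intro p; simp [fz]
  | cons e s ih =>
      intro p
      have hde : Dp (e :: s) = s.foldl Dstep (e, e) := by
        simp [Dp, Dstep]
      rw [List.foldl_cons, ih (Dstep p e), hde, ih (e, e)]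
      have h2 : fz (s.length + 1 + 1) = fz (s.length + 1) + fz s.length := fz_add_two _
      simp only [List.length_cons, Dstep]
      rw [h2]
      simp only [Prod.mk.injEq]
      constructor <;> ring

lemma Dp_append (p s : List ℤ) :
    Dp (p ++ s) =
      (fz (s.length + 1) * (Dp p).1 + fz s.length * (Dp p).2 + (Dp s).1,
       fz s.length * (Dp p).1 + (fz (s.length + 1) - fz s.length) * (Dp p).2 + (Dp s).2) := by
  rw [Dp, List.foldl_append, ← Dp, foldl_Dstep]

end Zeck

namespace Zeck

/-- universal bound on the pair fold for digit-bounded lists -/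
lemma Dp_bound (l : List ℤ) (h : ∀ e ∈ l, |e| ≤ 2) :
    |(Dp l).1| ≤ 2 * fz (l.length + 3) - 4 ∧ |(Dp l).2| ≤ 2 * fz (l.length + 2) - 2 := by
  induction l using List.reverseRecOn with
  | nil => refine ⟨?_, ?_⟩ <;> simp [fz] <;> decide
  | append_singleton l e ih =>
      have hl : ∀ x ∈ l, |x| ≤ 2 := fun x hx => h x (List.mem_append_left _ hx)
      have he : |e| ≤ 2 := h e (List.mem_append_right _ (List.mem_singleton_self e))
      obtain ⟨h1, h2⟩ := ih hl
      rw [Dp_snoc]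
      have hfz3 : fz (l.length + 1 + 3) = fz (l.length + 3) + fz (l.length + 2) := by
        rw [show l.length + 1 + 3 = (l.length + 2) + 2 by omega, fz_add_two,
          show l.length + 2 + 1 = l.length + 3 by omega]
      have hfz2 : fz (l.length + 1 + 2) = fz (l.length + 3) := by
        rw [show l.length + 1 + 2 = l.length + 3 by omega]
      rw [List.length_append, List.length_singleton, hfz3, hfz2]
      constructor
      · calc |(Dp l).1 + (Dp l).2 + e| ≤ |(Dp l).1| + |(Dp l).2| + |e| := by
              exact (abs_add_le _ _).trans (by gcongr; exact abs_add_le _ _)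
          _ ≤ _ := by linarith
      · calc |(Dp l).1 + e| ≤ |(Dp l).1| + |e| := abs_add_le _ _
          _ ≤ _ := by linarith

/-- the "conjugate direction" bound, valid for every digit-bounded list -/
lemma Dp_conj_bound (l : List ℤ) (h : ∀ e ∈ l, |e| ≤ 2) :
    |fz (l.length + 1) * (Dp l).2 - fz l.length * (Dp l).1| ≤ 2 * (fz (l.length + 1) - 1) := by
  induction l using List.reverseRecOn with
  | nil => simp [fz]
  | append_singleton l e ih =>
      have hl : ∀ x ∈ l, |x| ≤ 2 := fun x hx => h x (List.mem_append_left _ hx)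
      have he : |e| ≤ 2 := h e (List.mem_append_right _ (List.mem_singleton_self e))
      have ih' := ih hl
      rw [Dp_snoc]
      set k := l.length with hk
      have hfz : fz (k + 1 + 1) = fz (k + 1) + fz k := fz_add_two k
      rw [List.length_append, List.length_singleton]
      have key : fz (k + 1 + 1) * (Dstep (Dp l) e).2 - fz (k + 1) * (Dstep (Dp l) e).1
          = -(fz (k + 1) * (Dp l).2 - fz k * (Dp l).1) + e * fz k := by
        simp only [Dstep, hfz]; ring
      rw [key]
      have h1 : |(-(fz (k + 1) * (Dp l).2 - fz k * (Dp l).1)) + e * fz k|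
          ≤ |fz (k + 1) * (Dp l).2 - fz k * (Dp l).1| + |e| * fz k := by
        calc _ ≤ |(-(fz (k + 1) * (Dp l).2 - fz k * (Dp l).1))| + |e * fz k| := abs_add_le _ _
          _ = _ := by rw [abs_neg, abs_mul, abs_of_nonneg (fz_nonneg k)]
      have h2 : |e| * fz k ≤ 2 * fz k :=
        mul_le_mul_of_nonneg_right he (fz_nonneg k)
      have := fz_pos k
      calc |(-(fz (k + 1) * (Dp l).2 - fz k * (Dp l).1)) + e * fz k|
          ≤ |fz (k + 1) * (Dp l).2 - fz k * (Dp l).1| + |e| * fz k := h1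
        _ ≤ 2 * (fz (k + 1) - 1) + 2 * fz k := by linarith
        _ = 2 * (fz (k + 1 + 1) - 1) := by rw [hfz]; ring

/-- combining the two bounds pins the pair in a fixed box -/
lemma key_bound (k r : ℕ) (D D' Ds : ℤ)
    (h0 : fz (r + 1) * D + fz r * D' + Ds = 0)
    (hDs : |Ds| ≤ 2 * fz (r + 3))
    (h1 : |fz (k + 1) * D' - fz k * D| ≤ 2 * fz (k + 1)) :
    |D| ≤ 8 ∧ |D'| ≤ 8 := by
  set a := fz (k + 1) with ha
  set c := fz k with hc
  set b := fz (r + 1) with hb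
  set d := fz r with hd
  set N := fz (k + r + 1) with hN
  have hNid : N = c * d + a * b := fz_prod k r
  have hNpos : 1 ≤ N := fz_pos (k + r)
  have ha0 : 0 ≤ a := fz_nonneg _
  have hc0 : 0 ≤ c := fz_nonneg _
  have hb0 : 0 ≤ b := fz_nonneg _
  have hd0 : 0 ≤ d := fz_nonneg _
  have hca : c ≤ a := fz_mono (Nat.le_succ k)
  have hdb : d ≤ b := fz_mono (Nat.le_succ r)
  have hr3 : fz (r + 3) = 2 * b + d := by
    rw [show r + 3 = (r + 1) + 2 by omega, fz_add_two, show r + 1 + 1 = r + 2 by omega,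
      show r + 2 = r + 1 + 1 from rfl, fz_add_two r]
    simp only [← hb, ← hd]; ring
  have hP : b * D + d * D' = -Ds := by linarith
  have hPabs : |b * D + d * D'| ≤ 2 * (2 * b + d) := by
    rw [hP, abs_neg]; rw [hr3] at hDs; exact hDs
  have hQabs : |a * D' - c * D| ≤ 2 * a := h1
  constructor
  · have hid : N * D = a * (b * D + d * D') - d * (a * D' - c * D) := by
      rw [hNid]; ring
    have habs : |N * D| ≤ a * (2 * (2 * b + d)) + d * (2 * a) := by
      rw [hid]
      calc |a * (b * D + d * D') - d * (a * D' - c * D)|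
          ≤ |a * (b * D + d * D')| + |d * (a * D' - c * D)| := abs_sub _ _
        _ = a * |b * D + d * D'| + d * |a * D' - c * D| := by
            rw [abs_mul, abs_mul, abs_of_nonneg ha0, abs_of_nonneg hd0]
        _ ≤ _ := by
            gcongr
    have hcmp : a * (2 * (2 * b + d)) + d * (2 * a) ≤ 8 * N := by
      rw [hNid]; nlinarith [mul_le_mul_of_nonneg_left hdb ha0, mul_nonneg hc0 hd0]
    have : N * |D| ≤ N * 8 := by
      rw [← abs_of_nonneg (by linarith : (0:ℤ) ≤ N), ← abs_mul]
      calc |N * D| ≤ 8 * N := habs.trans hcmp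
        _ = |N| * 8 := by rw [abs_of_nonneg (by linarith : (0:ℤ) ≤ N)]; ring
    exact le_of_mul_le_mul_left this (by linarith)
  · have hid : N * D' = c * (b * D + d * D') + b * (a * D' - c * D) := by
      rw [hNid]; ring
    have habs : |N * D'| ≤ c * (2 * (2 * b + d)) + b * (2 * a) := by
      rw [hid]
      calc |c * (b * D + d * D') + b * (a * D' - c * D)|
          ≤ |c * (b * D + d * D')| + |b * (a * D' - c * D)| := abs_add_le _ _
        _ = c * |b * D + d * D'| + b * |a * D' - c * D| := by
            rw [abs_mul, abs_mul, abs_of_nonneg hc0, abs_of_nonneg hb0]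
        _ ≤ _ := by gcongr
    have hcmp : c * (2 * (2 * b + d)) + b * (2 * a) ≤ 8 * N := by
      rw [hNid]; nlinarith [mul_le_mul_of_nonneg_right hca hb0, mul_le_mul_of_nonneg_right hca hd0,
        mul_nonneg hc0 hd0, mul_nonneg ha0 hb0]
    have : N * |D'| ≤ N * 8 := by
      rw [← abs_of_nonneg (by linarith : (0:ℤ) ≤ N), ← abs_mul]
      calc |N * D'| ≤ 8 * N := habs.trans hcmp
        _ = |N| * 8 := by rw [abs_of_nonneg (by linarith : (0:ℤ) ≤ N)]; ring
    exact le_of_mul_le_mul_left this (by linarith)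

end Zeck

namespace Zeck

abbrev Γ := Fin 2 × Fin 2 × Fin 2

def dz (a : Fin 2) : ℤ := ((a : ℕ) : ℤ)

def eOf (t : Γ) : ℤ := dz t.1 + dz t.2.1 - dz t.2.2

lemma abs_eOf_le (t : Γ) : |eOf t| ≤ 2 := by
  have h1 : (t.1 : ℕ) ≤ 1 := Nat.lt_succ_iff.mp t.1.isLt
  have h2 : (t.2.1 : ℕ) ≤ 1 := Nat.lt_succ_iff.mp t.2.1.isLt
  have h3 : (t.2.2 : ℕ) ≤ 1 := Nat.lt_succ_iff.mp t.2.2.isLt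
  rw [abs_le, eOf, dz, dz, dz]
  omega

lemma valF_eq_S (w : List (Fin 2)) :
    valF w = S 2 (w.reverse.map dz) := by
  rw [valF, S]
  rw [List.length_map, List.length_reverse]
  apply Finset.sum_congr rfl
  intro i hi
  rw [Finset.mem_range] at hi
  have hi' : i < w.reverse.length := by rwa [List.length_reverse]
  have hi'' : i < (w.reverse.map dz).length := by
    rwa [List.length_map]
  rw [List.getD_eq_getElem _ _ hi', List.getD_eq_getElem _ _ hi'', List.getElem_map,
    Fib_eq_fz]
  rfl

lemma S2_map_eOf (u : List Γ) :
    S 2 (u.map eOf) =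
      S 2 (u.map (fun t => dz t.1)) + S 2 (u.map (fun t => dz t.2.1))
        - S 2 (u.map (fun t => dz t.2.2)) := by
  simp only [S, List.length_map, ← Finset.sum_sub_distrib, ← Finset.sum_add_distrib]
  apply Finset.sum_congr rfl
  intro i hi
  rw [Finset.mem_range] at hi
  have h1 : i < (u.map eOf).length := by rwa [List.length_map]
  have h2 : i < (u.map (fun t : Γ => dz t.1)).length := by rwa [List.length_map]
  have h3 : i < (u.map (fun t : Γ => dz t.2.1)).length := by rwa [List.length_map]
  have h4 : i < (u.map (fun t : Γ => dz t.2.2)).length := by rwa [List.length_map]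
  rw [List.getD_eq_getElem _ _ h1, List.getD_eq_getElem _ _ h2, List.getD_eq_getElem _ _ h3,
    List.getD_eq_getElem _ _ h4]
  simp only [List.getElem_map, eOf]
  ring

/-- the first coordinate of the pair-fold computes the value difference -/
lemma Dp_val (w : List Γ) :
    (Dp (w.map eOf)).1 =
      valF (w.map (fun t => t.1)) + valF (w.map (fun t => t.2.1))
        - valF (w.map (fun t => t.2.2)) := by
  rw [Dp_eq_S]
  simp only
  rw [← List.map_reverse, S2_map_eOf]
  rw [valF_eq_S, valF_eq_S, valF_eq_S]
  simp only [← List.map_reverse, List.map_map]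
  rfl

noncomputable def B : Finset (ℤ × ℤ) := Finset.Icc (-8, -8) (8, 8)

lemma mem_B_iff (p : ℤ × ℤ) : p ∈ B ↔ |p.1| ≤ 8 ∧ |p.2| ≤ 8 := by
  rw [B, Finset.mem_Icc]
  simp only [Prod.le_def, abs_le]
  tauto

/-- main boundedness: prefixes of words in the relation stay in the box -/
lemma prefix_mem (w : List Γ) (h0 : (Dp (w.map eOf)).1 = 0)
    {p : List Γ} (hp : p <+: w) : Dp (p.map eOf) ∈ B := by
  obtain ⟨s, rfl⟩ := hp
  rw [List.map_append, Dp_append] at h0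
  dsimp only at h0
  have hle : ∀ e ∈ s.map eOf, |e| ≤ 2 := by
    rintro e he
    obtain ⟨t, -, rfl⟩ := List.mem_map.mp he
    exact abs_eOf_le t
  have hlp : ∀ e ∈ p.map eOf, |e| ≤ 2 := by
    rintro e he
    obtain ⟨t, -, rfl⟩ := List.mem_map.mp he
    exact abs_eOf_le t
  have hlen : (s.map eOf).length = s.length := List.length_map _
  have hDs := (Dp_bound (s.map eOf) hle).1
  have hconj := Dp_conj_bound (p.map eOf) hlp
  rw [hlen] at h0 hDs
  have hlenp : (p.map eOf).length = p.length := List.length_map _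
  rw [hlenp] at hconj
  have hDs' : |(Dp (s.map eOf)).1| ≤ 2 * fz (s.length + 3) := by
    have := fz_nonneg (s.length + 3); linarith
  have hconj' : |fz (p.length + 1) * (Dp (p.map eOf)).2 - fz p.length * (Dp (p.map eOf)).1|
      ≤ 2 * fz (p.length + 1) := by
    have := fz_pos p.length; linarith
  have := key_bound p.length s.length (Dp (p.map eOf)).1 (Dp (p.map eOf)).2
    (Dp (s.map eOf)).1 (by linarith) hDs' hconj'
  rw [mem_B_iff]
  exact this

end Zeck

namespace Zeck

def tstep : Fin 3 → Fin 2 → Option (Fin 3)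
  | 0, 0 => some 0
  | 0, 1 => some 1
  | 1, 0 => some 2
  | 1, 1 => none
  | 2, 0 => some 2
  | 2, 1 => some 1

def trkF (s : Option (Fin 3)) (l : List (Fin 2)) : Option (Fin 3) :=
  l.foldl (fun o a => o.bind (fun st => tstep st a)) s

@[simp] lemma trkF_nil (s : Option (Fin 3)) : trkF s [] = s := rfl

lemma trkF_cons (s : Fin 3) (a : Fin 2) (l : List (Fin 2)) :
    trkF (some s) (a :: l) = trkF (tstep s a) l := rfl

@[simp] lemma trkF_none (l : List (Fin 2)) : trkF none l = none := by
  induction l with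
  | nil => rfl
  | cons a l ih => exact ih

lemma trkF_snoc (s : Option (Fin 3)) (l : List (Fin 2)) (a : Fin 2) :
    trkF s (l ++ [a]) = (trkF s l).bind (fun st => tstep st a) := by
  simp [trkF, List.foldl_append]

lemma trk_spec (l : List (Fin 2)) :
    (trkF (some 0) l ≠ none ↔ ¬ [1, 1] <:+: l.dropWhile (· = 0)) ∧
    (trkF (some 1) l ≠ none ↔ ¬ [1, 1] <:+: (1 :: l)) ∧
    (trkF (some 2) l ≠ none ↔ ¬ [1, 1] <:+: l) := by
  induction l with
  | nil =>
      refine ⟨by simp, by simp [List.infix_cons_iff], by simp⟩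
  | cons a l ih =>
      obtain ⟨ih0, ih1, ih2⟩ := ih
      have ha : a = 0 ∨ a = 1 := by fin_cases a; exacts [Or.inl rfl, Or.inr rfl]
      rcases ha with rfl | rfl
      · refine ⟨?_, ?_, ?_⟩
        · rw [trkF_cons, show tstep 0 0 = some 0 from rfl,
            show List.dropWhile (· = 0) ((0 : Fin 2) :: l) = List.dropWhile (· = 0) l from by
              simp [List.dropWhile_cons]]
          exact ih0
        · rw [trkF_cons, show tstep 1 0 = some 2 from rfl]
          rw [ih2]
          constructor
          · intro h hc
            apply h
            rw [List.infix_cons_iff] at hc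
            rcases hc with hc | hc
            · rw [List.cons_prefix_cons] at hc
              obtain ⟨-, hc⟩ := hc
              rw [List.cons_prefix_cons] at hc
              exact absurd hc.1 (by decide)
            · rw [List.infix_cons_iff] at hc
              rcases hc with hc | hc
              · rw [List.cons_prefix_cons] at hc
                exact absurd hc.1 (by decide)
              · exact hc
          · intro h hc
            apply h
            rw [List.infix_cons_iff, List.infix_cons_iff]
            right; right; exact hc
        · rw [trkF_cons, show tstep 2 0 = some 2 from rfl, ih2]
          constructor
          · intro h hc
            apply h
            rw [List.infix_cons_iff] at hc
            rcases hc with hc | hc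
            · rw [List.cons_prefix_cons] at hc
              exact absurd hc.1 (by decide)
            · exact hc
          · intro h hc
            apply h
            rw [List.infix_cons_iff]; right; exact hc
      · refine ⟨?_, ?_, ?_⟩
        · rw [trkF_cons, show tstep 0 1 = some 1 from rfl,
            show List.dropWhile (· = 0) ((1 : Fin 2) :: l) = (1 : Fin 2) :: l from by
              simp [List.dropWhile_cons]]
          exact ih1
        · rw [trkF_cons, show tstep 1 1 = none from rfl]
          simp only [trkF_none, ne_eq, not_true_eq_false, false_iff, not_not]
          rw [List.infix_cons_iff]
          left
          rw [List.cons_prefix_cons]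
          exact ⟨rfl, List.cons_prefix_cons.mpr ⟨rfl, List.nil_prefix⟩⟩
        · rw [trkF_cons, show tstep 2 1 = some 1 from rfl]
          exact ih1

lemma trk_zeckGood (l : List (Fin 2)) : trkF (some 0) l ≠ none ↔ zeckGood l := by
  unfold zeckGood
  exact (trk_spec l).1

end Zeck

namespace Zeck

lemma zero_mem_B : ((0 : ℤ), (0 : ℤ)) ∈ B := by decide

abbrev BSub : Type := {p : ℤ × ℤ // p ∈ B}

abbrev St : Type := (Fin 3 × Fin 3 × Fin 3) × BSub

abbrev Sig : Type := Option St

noncomputable def δ : Sig → Γ → Sig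
  | none, _ => none
  | some (ts, pr), t =>
    match tstep ts.1 t.1, tstep ts.2.1 t.2.1, tstep ts.2.2 t.2.2 with
    | some u1, some u2, some u3 =>
        if h : Dstep pr.val (eOf t) ∈ B then some ((u1, u2, u3), ⟨Dstep pr.val (eOf t), h⟩)
        else none
    | _, _, _ => none

noncomputable def M : DFA Γ Sig where
  step := δ
  start := some ((0, 0, 0), ⟨(0, 0), zero_mem_B⟩)
  accept := {s | ∃ ts pr, s = some (ts, pr) ∧ (pr : ℤ × ℤ).1 = 0}

@[simp] lemma M_step (s : Sig) (t : Γ) : M.step s t = δ s t := rfl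
@[simp] lemma M_start : M.start = some ((0, 0, 0), ⟨(0, 0), zero_mem_B⟩) := rfl

@[simp] lemma δ_none (t : Γ) : δ none t = none := rfl

lemma run_fwd (w : List Γ) : ∀ (ts : Fin 3 × Fin 3 × Fin 3) (pr : BSub),
    M.eval w = some (ts, pr) →
    (pr : ℤ × ℤ) = Dp (w.map eOf) ∧
    trkF (some 0) (w.map (fun t => t.1)) = some ts.1 ∧
    trkF (some 0) (w.map (fun t => t.2.1)) = some ts.2.1 ∧
    trkF (some 0) (w.map (fun t => t.2.2)) = some ts.2.2 := by
  induction w using List.reverseRecOn with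
  | nil =>
      intro ts pr h
      have h' : (some (((0 : Fin 3), (0 : Fin 3), (0 : Fin 3)), (⟨((0 : ℤ), (0 : ℤ)), zero_mem_B⟩ : BSub)) : Sig)
          = some (ts, pr) := h
      rw [Option.some.injEq, Prod.mk.injEq] at h'
      obtain ⟨hts, hpr⟩ := h'
      subst hts; subst hpr
      exact ⟨rfl, rfl, rfl, rfl⟩
  | append_singleton w t ih =>
      intro ts pr h
      rw [DFA.eval_append_singleton, M_step] at h
      cases hev : M.eval w with
      | none => rw [hev] at h; simp at h
      | some s =>
          obtain ⟨ts0, pr0⟩ := s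
          rw [hev] at h
          obtain ⟨ih1, ih2, ih3, ih4⟩ := ih ts0 pr0 hev
          cases h1 : tstep ts0.1 t.1 with
          | none => simp [δ, h1] at h
          | some u1 =>
            cases h2 : tstep ts0.2.1 t.2.1 with
            | none => simp [δ, h1, h2] at h
            | some u2 =>
              cases h3 : tstep ts0.2.2 t.2.2 with
              | none => simp [δ, h1, h2, h3] at h
              | some u3 =>
                simp only [δ, h1, h2, h3] at h
                by_cases hmem : Dstep pr0.val (eOf t) ∈ B
                · rw [dif_pos hmem, Option.some.injEq, Prod.mk.injEq] at h
                  obtain ⟨hts, hpr⟩ := h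
                  subst hts; subst hpr
                  refine ⟨?_, ?_, ?_, ?_⟩
                  · show Dstep (pr0 : ℤ × ℤ) (eOf t) = _
                    simp only [List.map_append, List.map_cons, List.map_nil, Dp_snoc, ih1]
                  · simp only [List.map_append, List.map_cons, List.map_nil]
                    rw [trkF_snoc, ih2]
                    simpa using h1
                  · simp only [List.map_append, List.map_cons, List.map_nil]
                    rw [trkF_snoc, ih3]
                    simpa using h2
                  · simp only [List.map_append, List.map_cons, List.map_nil]
                    rw [trkF_snoc, ih4]
                    simpa using h3
                · rw [dif_neg hmem] at h
                  exact absurd h (by simp)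

lemma run_bwd (w : List Γ)
    (hB : ∀ p, p <+: w → Dp (p.map eOf) ∈ B) :
    ∀ t1 t2 t3, trkF (some 0) (w.map (fun t => t.1)) = some t1 →
      trkF (some 0) (w.map (fun t => t.2.1)) = some t2 →
      trkF (some 0) (w.map (fun t => t.2.2)) = some t3 →
      ∃ h : Dp (w.map eOf) ∈ B,
        M.eval w = some ((t1, t2, t3), ⟨Dp (w.map eOf), h⟩) := by
  induction w using List.reverseRecOn with
  | nil =>
      intro t1 t2 t3 h1 h2 h3
      simp only [List.map_nil, trkF_nil, Option.some.injEq] at h1 h2 h3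
      subst h1; subst h2; subst h3
      exact ⟨zero_mem_B, rfl⟩
  | append_singleton w t ih =>
      intro t1 t2 t3 h1 h2 h3
      simp only [List.map_append, List.map_cons, List.map_nil] at h1 h2 h3
      rw [trkF_snoc] at h1 h2 h3
      obtain ⟨u1, hu1, hs1⟩ := Option.bind_eq_some_iff.mp h1
      obtain ⟨u2, hu2, hs2⟩ := Option.bind_eq_some_iff.mp h2
      obtain ⟨u3, hu3, hs3⟩ := Option.bind_eq_some_iff.mp h3
      have hBw : ∀ p, p <+: w → Dp (p.map eOf) ∈ B :=
        fun p hp => hB p (hp.trans (List.prefix_append w [t]))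
      obtain ⟨hmem, hev⟩ := ih hBw u1 u2 u3 hu1 hu2 hu3
      have hmem' : Dp ((w ++ [t]).map eOf) ∈ B := hB _ (List.prefix_refl _)
      refine ⟨hmem', ?_⟩
      rw [DFA.eval_append_singleton, M_step, hev]
      have hd : Dp ((w ++ [t]).map eOf) = Dstep (Dp (w.map eOf)) (eOf t) := by
        simp only [List.map_append, List.map_cons, List.map_nil, Dp_snoc]
      simp only [δ, hs1, hs2, hs3]
      have hmem2 : Dstep (Dp (w.map eOf)) (eOf t) ∈ B := hd ▸ hmem'
      rw [dif_pos hmem2]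
      exact congrArg (fun pr => (some ((t1, t2, t3), pr) : Sig)) (Subtype.ext hd.symm)

end Zeck


/-- the Zeckendorf numeration system is addable: the language of
triples `(x, y, z)` of equal-length words over `{0,1}`, each a valid Zeckendorf
representation up to leading zeros, with `val_F x + val_F y = val_F z`, is
regular over `{0,1}³`. -/
theorem zeckendorf_addable :
    Language.IsRegular
      { w : List (Fin 2 × Fin 2 × Fin 2) |
        zeckGood (w.map (fun t => t.1)) ∧ zeckGood (w.map (fun t => t.2.1)) ∧
        zeckGood (w.map (fun t => t.2.2)) ∧
        valF (w.map (fun t => t.1)) + valF (w.map (fun t => t.2.1)) =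
          valF (w.map (fun t => t.2.2)) } := by
  refine ⟨Zeck.Sig, inferInstance, Zeck.M, ?_⟩
  ext w
  rw [DFA.mem_accepts]
  constructor
  · rintro ⟨ts, pr, hev, h0⟩
    obtain ⟨hpr, h1, h2, h3⟩ := Zeck.run_fwd w ts pr hev
    have g1 : zeckGood (w.map (fun t => t.1)) :=
      (Zeck.trk_zeckGood _).mp (by rw [h1]; simp)
    have g2 : zeckGood (w.map (fun t => t.2.1)) :=
      (Zeck.trk_zeckGood _).mp (by rw [h2]; simp)
    have g3 : zeckGood (w.map (fun t => t.2.2)) :=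
      (Zeck.trk_zeckGood _).mp (by rw [h3]; simp)
    refine ⟨g1, g2, g3, ?_⟩
    have hval := Zeck.Dp_val w
    rw [← hpr] at hval
    rw [h0] at hval
    linarith
  · rintro ⟨g1, g2, g3, heq⟩
    have h0 : (Zeck.Dp (w.map Zeck.eOf)).1 = 0 := by
      rw [Zeck.Dp_val]; linarith
    have hB : ∀ p, p <+: w → Zeck.Dp (p.map Zeck.eOf) ∈ Zeck.B :=
      fun p hp => Zeck.prefix_mem w h0 hp
    have a1 := (Zeck.trk_zeckGood (w.map (fun t => t.1))).mpr g1
    have a2 := (Zeck.trk_zeckGood (w.map (fun t => t.2.1))).mpr g2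
    have a3 := (Zeck.trk_zeckGood (w.map (fun t => t.2.2))).mpr g3
    obtain ⟨t1, ht1⟩ := Option.ne_none_iff_exists'.mp a1
    obtain ⟨t2, ht2⟩ := Option.ne_none_iff_exists'.mp a2
    obtain ⟨t3, ht3⟩ := Option.ne_none_iff_exists'.mp a3
    obtain ⟨hm, hev⟩ := Zeck.run_bwd w hB t1 t2 t3 ht1 ht2 ht3
    exact ⟨(t1, t2, t3), ⟨Zeck.Dp (w.map Zeck.eOf), hm⟩, hev, h0⟩
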